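/- Strict separation for the Z0/Z1 channel: let (N, P_S) be the Z0/Z1 channel and N^{CSIR} its associated channel with CSIR. Then η^{NS,ca}_{opt,M=2,n=2}(N^{CSIR}, P_S) > η^{NS,ca}_{opt,M=2,n=2}(N, P_S), i.e., providing the channel state to the receiver strictly increases the optimal NS-assisted probability of success with causal CSIT at message size 2 and blocklength 2. -/
import Mathlib


open scoped Classical BigOperators
open Finset Filter

noncomputable section

def IsPMF {S : Type*} [Fintype S] (P : S → ℝ) : Prop :=
  (∀ s, 0 ≤ P s) ∧ ∑ s, P s = 1

def IsChannel {X Y S : Type*} [Fintype Y] (N : Y → X → S → ℝ) : Prop :=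
  (∀ y x s, 0 ≤ N y x s) ∧ ∀ x s, ∑ y, N y x s = 1

def IsCondPMF {X S : Type*} [Fintype X] (PXS : X → S → ℝ) : Prop :=
  (∀ x s, 0 ≤ PXS x s) ∧ ∀ s, ∑ x, PXS x s = 1

def prodP {S : Type*} (P : S → ℝ) {n : ℕ} (s : Fin n → S) : ℝ := ∏ i, P (s i)

def prodN {X Y S : Type*} (N : Y → X → S → ℝ) {n : ℕ}
    (y : Fin n → Y) (x : Fin n → X) (s : Fin n → S) : ℝ :=
  ∏ i, N (y i) (x i) (s i)

/-- NS-assisted coding scheme with causal CSIT: nonnegativity, normalization,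
and the conditions C1, C2, C3. -/
def IsNSCa {X Y S : Type*} [Fintype X] [Fintype Y] [Fintype S] (M n : ℕ)
    (Z : (Fin n → X) → Fin M → Fin M → (Fin n → S) → (Fin n → Y) → ℝ) : Prop :=
  (∀ x wh w s y, 0 ≤ Z x wh w s y) ∧
  (∀ w s y, ∑ x, ∑ wh, Z x wh w s y = 1) ∧
  (∀ x w s y y', ∑ wh, Z x wh w s y = ∑ wh, Z x wh w s y') ∧
  (∀ wh w w' s s' y, ∑ x, Z x wh w s y = ∑ x, Z x wh w' s' y) ∧
  (∀ i : ℕ, 1 ≤ i → i < n →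
    ∀ (x : Fin n → X) wh w s s' y, (∀ j : Fin n, (j : ℕ) < i → s j = s' j) →
      ∑ x' ∈ univ.filter (fun x' : Fin n → X => ∀ j : Fin n, (j : ℕ) < i → x' j = x j),
        Z x' wh w s y =
      ∑ x' ∈ univ.filter (fun x' : Fin n → X => ∀ j : Fin n, (j : ℕ) < i → x' j = x j),
        Z x' wh w s' y)

def etaNS {X Y S : Type*} [Fintype X] [Fintype Y] [Fintype S]
    (N : Y → X → S → ℝ) (P : S → ℝ) (M n : ℕ)
    (Z : (Fin n → X) → Fin M → Fin M → (Fin n → S) → (Fin n → Y) → ℝ) : ℝ :=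
  (1 / (M : ℝ)) * ∑ w, ∑ x, ∑ s, ∑ y, prodP P s * prodN N y x s * Z x w w s y

def etaNSOpt {X Y S : Type*} [Fintype X] [Fintype Y] [Fintype S]
    (N : Y → X → S → ℝ) (P : S → ℝ) (M n : ℕ) : ℝ :=
  sSup {e : ℝ | ∃ Z : (Fin n → X) → Fin M → Fin M → (Fin n → S) → (Fin n → Y) → ℝ,
    IsNSCa M n Z ∧ etaNS N P M n Z = e}

/-- The length-`(j+1)` prefix `s^{j+1}` of a state sequence. -/
def prefixS {S : Type*} {n : ℕ} (s : Fin n → S) (j : Fin n) : Fin ((j : ℕ) + 1) → S :=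
  fun k => s ⟨k, Nat.lt_of_le_of_lt (Nat.le_of_lt_succ k.isLt) j.isLt⟩

/-- A classical coding scheme with causal CSIT. -/
structure ClassicalCa (X S Y : Type*) [Fintype X] (M n : ℕ) where
  Q : Type
  fq : Fintype Q
  PQ : Q → ℝ
  E : (j : Fin n) → X → (Fin (j : ℕ) → X) → Fin M → (Fin ((j : ℕ) + 1) → S) → Q → ℝ
  D : Fin M → (Fin n → Y) → Q → ℝ
  PQ_nonneg : ∀ q, 0 ≤ PQ q
  PQ_sum : ∑ q ∈ @Finset.univ Q fq, PQ q = 1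
  E_nonneg : ∀ j xj h w sj q, 0 ≤ E j xj h w sj q
  E_sum : ∀ j h w sj q, ∑ xj, E j xj h w sj q = 1
  D_nonneg : ∀ wh y q, 0 ≤ D wh y q
  D_sum : ∀ y q, ∑ wh, D wh y q = 1

def etaC {X Y S : Type*} [Fintype X] [Fintype Y] [Fintype S]
    (N : Y → X → S → ℝ) (P : S → ℝ) (M n : ℕ) (C : ClassicalCa X S Y M n) : ℝ :=
  (1 / (M : ℝ)) * ∑ w : Fin M, ∑ q ∈ @Finset.univ C.Q C.fq, C.PQ q *
    ∑ x : Fin n → X, ∑ s : Fin n → S, ∑ y : Fin n → Y,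
      prodP P s *
      (∏ j, C.E j (x j) (fun k => x ⟨k, k.isLt.trans j.isLt⟩) w (prefixS s j) q) *
      prodN N y x s * C.D w y q

def etaCOpt {X Y S : Type*} [Fintype X] [Fintype Y] [Fintype S]
    (N : Y → X → S → ℝ) (P : S → ℝ) (M n : ℕ) : ℝ :=
  sSup {e : ℝ | ∃ C : ClassicalCa X S Y M n, etaC N P M n C = e}

/-- Conditional mutual information I(X;Y|S) for the joint distribution
P_{XYS}(x,y,s) = P_S(s) P_{X|S}(x|s) N(y|x,s), in bits. -/
def condMI {X Y S : Type*} [Fintype X] [Fintype Y] [Fintype S]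
    (N : Y → X → S → ℝ) (P : S → ℝ) (PXS : X → S → ℝ) : ℝ :=
  ∑ x, ∑ y, ∑ s,
    (P s * PXS x s * N y x s) *
      Real.logb 2 ((P s * PXS x s * N y x s) * P s /
        ((∑ y', P s * PXS x s * N y' x s) * (∑ x', P s * PXS x' s * N y x' s)))

/-- Transition function of the Z0/Z1 channel (arguments: output, input, state). -/
def NZ (y x s : Bool) : ℝ := if x = s then (if y = x then 1 else 0) else 1 / 2

/-- The uniform state distribution of the Z0/Z1 channel. -/
def PZ (_ : Bool) : ℝ := 1 / 2

/-- The channel with CSIR associated to a channel with state. -/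
def NCSIR {X Y S : Type*} (N : Y → X → S → ℝ) : (Y × S) → X → S → ℝ :=
  fun ys x s => if ys.2 = s then N ys.1 x s else 0



lemma sum_pi_fin_two {α : Type*} [Fintype α] (f : (Fin 2 → α) → ℝ) :
    ∑ v, f v = ∑ a, ∑ b, f ![a, b] := by
  rw [Fintype.sum_equiv (finTwoArrowEquiv α) f (fun p => f ![p.1, p.2])
    (fun v => by congr 1; funext i; fin_cases i <;> rfl), Fintype.sum_prod_type]

lemma sum_prodN_two {X Y S : Type*} [Fintype Y] {N : Y → X → S → ℝ}
    (hN : IsChannel N) (x : Fin 2 → X) (s : Fin 2 → S) :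
    ∑ y : Fin 2 → Y, prodN N y x s = 1 := by
  rw [sum_pi_fin_two (fun y => prodN N y x s)]
  simp only [prodN, Fin.prod_univ_two]
  simp only [Matrix.cons_val_zero, Matrix.cons_val_one, Matrix.head_cons]
  rw [← Finset.sum_mul_sum]
  rw [hN.2, hN.2, mul_one]

lemma sum_prodP_two {S : Type*} [Fintype S] {P : S → ℝ} (hP : IsPMF P) :
    ∑ s : Fin 2 → S, prodP P s = 1 := by
  rw [sum_pi_fin_two (fun s => prodP P s)]
  simp only [prodP, Fin.prod_univ_two, Matrix.cons_val_zero, Matrix.cons_val_one, Matrix.head_cons]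
  rw [← Finset.sum_mul_sum, hP.2, mul_one]

lemma prodP_nonneg {S : Type*} {P : S → ℝ} (h : ∀ s, 0 ≤ P s) {n : ℕ} (s : Fin n → S) :
    0 ≤ prodP P s := Finset.prod_nonneg fun i _ => h _
lemma prodN_nonneg {X Y S : Type*} {N : Y → X → S → ℝ} (h : ∀ y x s, 0 ≤ N y x s) {n : ℕ}
    (y : Fin n → Y) (x : Fin n → X) (s : Fin n → S) : 0 ≤ prodN N y x s :=
  Finset.prod_nonneg fun i _ => h _ _ _

lemma etaNS_le_one {X Y S : Type*} [Fintype X] [Fintype Y] [Fintype S] [Nonempty Y]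
    {N : Y → X → S → ℝ} {P : S → ℝ} (hN : IsChannel N) (hP : IsPMF P)
    (Z : (Fin 2 → X) → Fin 2 → Fin 2 → (Fin 2 → S) → (Fin 2 → Y) → ℝ)
    (hZ : IsNSCa 2 2 Z) : etaNS N P 2 2 Z ≤ 1 := by
  obtain ⟨hpos, hnorm, hC1, _, _⟩ := hZ
  have y₀ : Fin 2 → Y := Classical.arbitrary _
  have key : ∀ w : Fin 2, ∑ x, ∑ s, ∑ y, prodP P s * prodN N y x s * Z x w w s y ≤ 1 := by
    intro w
    have step1 : ∀ (x : Fin 2 → X) (s : Fin 2 → S) (y : Fin 2 → Y),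
        prodP P s * prodN N y x s * Z x w w s y ≤
        prodP P s * prodN N y x s * ∑ wh, Z x wh w s y₀ := by
      intro x s y
      have h1 : Z x w w s y ≤ ∑ wh, Z x wh w s y :=
        Finset.single_le_sum (f := fun wh => Z x wh w s y) (fun i _ => hpos _ _ _ _ _)
          (Finset.mem_univ w)
      have h2 : (∑ wh, Z x wh w s y) = ∑ wh, Z x wh w s y₀ := hC1 x w s y y₀
      have hnn : 0 ≤ prodP P s * prodN N y x s :=
        mul_nonneg (prodP_nonneg hP.1 s) (prodN_nonneg hN.1 y x s)
      calc prodP P s * prodN N y x s * Z x w w s y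
          ≤ prodP P s * prodN N y x s * ∑ wh, Z x wh w s y := by
            exact mul_le_mul_of_nonneg_left h1 hnn
        _ = _ := by rw [h2]
    calc ∑ x, ∑ s, ∑ y, prodP P s * prodN N y x s * Z x w w s y
        ≤ ∑ x, ∑ s, ∑ y, prodP P s * prodN N y x s * ∑ wh, Z x wh w s y₀ := by
          refine Finset.sum_le_sum fun x _ => Finset.sum_le_sum fun s _ =>
            Finset.sum_le_sum fun y _ => step1 x s y
      _ = ∑ x, ∑ s, (∑ y, prodN N y x s) * (prodP P s * ∑ wh, Z x wh w s y₀) := by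
          refine Finset.sum_congr rfl fun x _ => Finset.sum_congr rfl fun s _ => ?_
          rw [Finset.sum_mul]
          exact Finset.sum_congr rfl fun y _ => by ring
      _ = ∑ x, ∑ s, prodP P s * ∑ wh, Z x wh w s y₀ := by
          refine Finset.sum_congr rfl fun x _ => Finset.sum_congr rfl fun s _ => ?_
          rw [sum_prodN_two hN, one_mul]
      _ = ∑ s, prodP P s * (∑ x, ∑ wh, Z x wh w s y₀) := by
          rw [Finset.sum_comm]
          exact Finset.sum_congr rfl fun s _ => by rw [Finset.mul_sum]
      _ = ∑ s, prodP P s := by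
          refine Finset.sum_congr rfl fun s _ => by rw [hnorm w s y₀, mul_one]
      _ = 1 := sum_prodP_two hP
  rw [etaNS, Fin.sum_univ_two]
  have := key 0
  have := key 1
  norm_num
  linarith

/-- encoder bit -/
def encB (w : Fin 2) (s : Bool) : Bool := if w = 0 then s else !s
/-- decoder -/
def decW (y : Fin 2 → Bool × Bool) : Fin 2 :=
  if (y 0).1 ≠ (y 0).2 ∨ (y 1).1 ≠ (y 1).2 then 1 else 0
/-- witness scheme -/
def Zw : (Fin 2 → Bool) → Fin 2 → Fin 2 → (Fin 2 → Bool) → (Fin 2 → Bool × Bool) → ℝ :=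
  fun x wh w s y => if (∀ i, x i = encB w (s i)) ∧ wh = decW y then 1 else 0

lemma Zw_eq (x wh w s y) :
    Zw x wh w s y = (if x = (fun i => encB w (s i)) then (1:ℝ) else 0) *
      (if wh = decW y then 1 else 0) := by
  rw [Zw]
  by_cases h1 : x = fun i => encB w (s i)
  · by_cases h2 : wh = decW y <;> simp [h1, h2, funext_iff]
  · have : ¬ (∀ i, x i = encB w (s i)) := fun h => h1 (funext h)
    simp [this, h1]

lemma Zw_isNSCa : IsNSCa 2 2 Zw := by
  refine ⟨?_, ?_, ?_, ?_, ?_⟩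
  · intro x wh w s y
    rw [Zw]; split <;> norm_num
  · intro w s y
    simp only [Zw_eq, ← Finset.sum_mul, ← Finset.mul_sum]
    rw [Finset.sum_ite_eq' Finset.univ (fun i => encB w (s i)) (fun _ => (1:ℝ))]
    rw [Finset.sum_ite_eq' Finset.univ (decW y) (fun _ => (1:ℝ))]
    simp
  · intro x w s y y'
    simp only [Zw_eq, ← Finset.mul_sum]
    rw [Finset.sum_ite_eq' Finset.univ (decW y) (fun _ => (1:ℝ)),
        Finset.sum_ite_eq' Finset.univ (decW y') (fun _ => (1:ℝ))]
    simp
  · intro wh w w' s s' y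
    simp only [Zw_eq, ← Finset.sum_mul]
    rw [Finset.sum_ite_eq' Finset.univ (fun i => encB w (s i)) (fun _ => (1:ℝ)),
        Finset.sum_ite_eq' Finset.univ (fun i => encB w' (s' i)) (fun _ => (1:ℝ))]
    simp
  · intro i hi1 hi2 x wh w s s' y hss
    interval_cases i
    have hpred : ∀ (v : Fin 2 → Bool),
        (∀ j : Fin 2, (j : ℕ) < 1 → v j = x j) ↔ v 0 = x 0 := by
      intro v
      constructor
      · intro h; exact h 0 (by norm_num)
      · intro h j hj
        have : j = 0 := by omega
        rw [this]; exact h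
    have hs0 : s 0 = s' 0 := hss 0 (by norm_num)
    have key : ∀ (t : Fin 2 → Bool),
        ∑ x' ∈ univ.filter (fun x' : Fin 2 → Bool => ∀ j : Fin 2, (j : ℕ) < 1 → x' j = x j),
          Zw x' wh w t y =
        (if encB w (t 0) = x 0 then (1:ℝ) else 0) * (if wh = decW y then 1 else 0) := by
      intro t
      rw [Finset.sum_filter]
      have hterm : ∀ x' : Fin 2 → Bool,
          (if (∀ j : Fin 2, (j : ℕ) < 1 → x' j = x j) then Zw x' wh w t y else 0) =
          (if x' = (fun i => encB w (t i)) then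
            ((if encB w (t 0) = x 0 then (1:ℝ) else 0) * (if wh = decW y then 1 else 0))
          else 0) := by
        intro x'
        rw [Zw_eq]
        by_cases h : x' = fun i => encB w (t i)
        · subst h
          simp only [hpred, if_pos rfl, one_mul]
          by_cases h2 : encB w (t 0) = x 0 <;> simp [h2]
        · simp only [hpred, if_neg h, zero_mul]
          split <;> rfl
      rw [Finset.sum_congr rfl fun x' _ => hterm x']
      rw [Finset.sum_ite_eq' Finset.univ (fun i => encB w (t i))
        (fun _ => (if encB w (t 0) = x 0 then (1:ℝ) else 0) * (if wh = decW y then 1 else 0))]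
      simp
    have e1 := key s
    have e2 := key s'
    rw [Finset.filter_congr_decidable] at e1 e2
    rw [Finset.filter_congr_decidable, Finset.filter_congr_decidable]
    rw [e1, e2, hs0]

set_option maxHeartbeats 2000000 in
lemma etaZw : etaNS (NCSIR NZ) PZ 2 2 Zw = 7/8 := by
  rw [etaNS]
  simp only [sum_pi_fin_two, Fin.sum_univ_two, Fintype.sum_prod_type, Fintype.sum_bool,
    prodP, prodN, Fin.prod_univ_two, Matrix.cons_val_zero, Matrix.cons_val_one, Matrix.head_cons]
  norm_num [NCSIR, NZ, PZ, Zw, encB, decW, Fin.forall_fin_two, Matrix.cons_val_zero,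
    Matrix.cons_val_one, Matrix.head_cons]

set_option maxRecDepth 100000 in
set_option maxHeartbeats 4000000 in
lemma etaNS_ub (Z : (Fin 2 → Bool) → Fin 2 → Fin 2 → (Fin 2 → Bool) → (Fin 2 → Bool) → ℝ)
    (hZ : IsNSCa 2 2 Z) : etaNS NZ PZ 2 2 Z ≤ 13/16 := by
  obtain ⟨hpos, hnorm, hC1, hC2, hC3⟩ := hZ
  have hobj : etaNS NZ PZ 2 2 Z =
      (1/8 : ℝ) * Z ![false, false] 0 0 ![false, false] ![false, false] +
      (1/16 : ℝ) * Z ![false, false] 0 0 ![false, true] ![false, false] +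
      (1/16 : ℝ) * Z ![false, false] 0 0 ![false, true] ![false, true] +
      (1/16 : ℝ) * Z ![false, false] 0 0 ![true, false] ![false, false] +
      (1/16 : ℝ) * Z ![false, false] 0 0 ![true, false] ![true, false] +
      (1/32 : ℝ) * Z ![false, false] 0 0 ![true, true] ![false, false] +
      (1/32 : ℝ) * Z ![false, false] 0 0 ![true, true] ![false, true] +
      (1/32 : ℝ) * Z ![false, false] 0 0 ![true, true] ![true, false] +
      (1/32 : ℝ) * Z ![false, false] 0 0 ![true, true] ![true, true] +
      (1/8 : ℝ) * Z ![false, false] 1 1 ![false, false] ![false, false] +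
      (1/16 : ℝ) * Z ![false, false] 1 1 ![false, true] ![false, false] +
      (1/16 : ℝ) * Z ![false, false] 1 1 ![false, true] ![false, true] +
      (1/16 : ℝ) * Z ![false, false] 1 1 ![true, false] ![false, false] +
      (1/16 : ℝ) * Z ![false, false] 1 1 ![true, false] ![true, false] +
      (1/32 : ℝ) * Z ![false, false] 1 1 ![true, true] ![false, false] +
      (1/32 : ℝ) * Z ![false, false] 1 1 ![true, true] ![false, true] +
      (1/32 : ℝ) * Z ![false, false] 1 1 ![true, true] ![true, false] +
      (1/32 : ℝ) * Z ![false, false] 1 1 ![true, true] ![true, true] +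
      (1/16 : ℝ) * Z ![false, true] 0 0 ![false, false] ![false, false] +
      (1/16 : ℝ) * Z ![false, true] 0 0 ![false, false] ![false, true] +
      (1/8 : ℝ) * Z ![false, true] 0 0 ![false, true] ![false, true] +
      (1/32 : ℝ) * Z ![false, true] 0 0 ![true, false] ![false, false] +
      (1/32 : ℝ) * Z ![false, true] 0 0 ![true, false] ![false, true] +
      (1/32 : ℝ) * Z ![false, true] 0 0 ![true, false] ![true, false] +
      (1/32 : ℝ) * Z ![false, true] 0 0 ![true, false] ![true, true] +
      (1/16 : ℝ) * Z ![false, true] 0 0 ![true, true] ![false, true] +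
      (1/16 : ℝ) * Z ![false, true] 0 0 ![true, true] ![true, true] +
      (1/16 : ℝ) * Z ![false, true] 1 1 ![false, false] ![false, false] +
      (1/16 : ℝ) * Z ![false, true] 1 1 ![false, false] ![false, true] +
      (1/8 : ℝ) * Z ![false, true] 1 1 ![false, true] ![false, true] +
      (1/32 : ℝ) * Z ![false, true] 1 1 ![true, false] ![false, false] +
      (1/32 : ℝ) * Z ![false, true] 1 1 ![true, false] ![false, true] +
      (1/32 : ℝ) * Z ![false, true] 1 1 ![true, false] ![true, false] +
      (1/32 : ℝ) * Z ![false, true] 1 1 ![true, false] ![true, true] +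
      (1/16 : ℝ) * Z ![false, true] 1 1 ![true, true] ![false, true] +
      (1/16 : ℝ) * Z ![false, true] 1 1 ![true, true] ![true, true] +
      (1/16 : ℝ) * Z ![true, false] 0 0 ![false, false] ![false, false] +
      (1/16 : ℝ) * Z ![true, false] 0 0 ![false, false] ![true, false] +
      (1/32 : ℝ) * Z ![true, false] 0 0 ![false, true] ![false, false] +
      (1/32 : ℝ) * Z ![true, false] 0 0 ![false, true] ![false, true] +
      (1/32 : ℝ) * Z ![true, false] 0 0 ![false, true] ![true, false] +
      (1/32 : ℝ) * Z ![true, false] 0 0 ![false, true] ![true, true] +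
      (1/8 : ℝ) * Z ![true, false] 0 0 ![true, false] ![true, false] +
      (1/16 : ℝ) * Z ![true, false] 0 0 ![true, true] ![true, false] +
      (1/16 : ℝ) * Z ![true, false] 0 0 ![true, true] ![true, true] +
      (1/16 : ℝ) * Z ![true, false] 1 1 ![false, false] ![false, false] +
      (1/16 : ℝ) * Z ![true, false] 1 1 ![false, false] ![true, false] +
      (1/32 : ℝ) * Z ![true, false] 1 1 ![false, true] ![false, false] +
      (1/32 : ℝ) * Z ![true, false] 1 1 ![false, true] ![false, true] +
      (1/32 : ℝ) * Z ![true, false] 1 1 ![false, true] ![true, false] +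
      (1/32 : ℝ) * Z ![true, false] 1 1 ![false, true] ![true, true] +
      (1/8 : ℝ) * Z ![true, false] 1 1 ![true, false] ![true, false] +
      (1/16 : ℝ) * Z ![true, false] 1 1 ![true, true] ![true, false] +
      (1/16 : ℝ) * Z ![true, false] 1 1 ![true, true] ![true, true] +
      (1/32 : ℝ) * Z ![true, true] 0 0 ![false, false] ![false, false] +
      (1/32 : ℝ) * Z ![true, true] 0 0 ![false, false] ![false, true] +
      (1/32 : ℝ) * Z ![true, true] 0 0 ![false, false] ![true, false] +
      (1/32 : ℝ) * Z ![true, true] 0 0 ![false, false] ![true, true] +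
      (1/16 : ℝ) * Z ![true, true] 0 0 ![false, true] ![false, true] +
      (1/16 : ℝ) * Z ![true, true] 0 0 ![false, true] ![true, true] +
      (1/16 : ℝ) * Z ![true, true] 0 0 ![true, false] ![true, false] +
      (1/16 : ℝ) * Z ![true, true] 0 0 ![true, false] ![true, true] +
      (1/8 : ℝ) * Z ![true, true] 0 0 ![true, true] ![true, true] +
      (1/32 : ℝ) * Z ![true, true] 1 1 ![false, false] ![false, false] +
      (1/32 : ℝ) * Z ![true, true] 1 1 ![false, false] ![false, true] +
      (1/32 : ℝ) * Z ![true, true] 1 1 ![false, false] ![true, false] +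
      (1/32 : ℝ) * Z ![true, true] 1 1 ![false, false] ![true, true] +
      (1/16 : ℝ) * Z ![true, true] 1 1 ![false, true] ![false, true] +
      (1/16 : ℝ) * Z ![true, true] 1 1 ![false, true] ![true, true] +
      (1/16 : ℝ) * Z ![true, true] 1 1 ![true, false] ![true, false] +
      (1/16 : ℝ) * Z ![true, true] 1 1 ![true, false] ![true, true] +
      (1/8 : ℝ) * Z ![true, true] 1 1 ![true, true] ![true, true] := by
    rw [etaNS]
    simp only [sum_pi_fin_two, Fin.sum_univ_two, Fintype.sum_bool, prodP, prodN,
      Fin.prod_univ_two, Matrix.cons_val_zero, Matrix.cons_val_one, Matrix.head_cons]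
    norm_num [NZ, PZ]
    ring
  have h1 := hnorm 0 ![false, false] ![false, false]
  simp only [sum_pi_fin_two, Fin.sum_univ_two, Fintype.sum_bool] at h1
  have h2 := hnorm 0 ![false, false] ![false, true]
  simp only [sum_pi_fin_two, Fin.sum_univ_two, Fintype.sum_bool] at h2
  have h3 := hnorm 0 ![false, false] ![true, false]
  simp only [sum_pi_fin_two, Fin.sum_univ_two, Fintype.sum_bool] at h3
  have h4 := hnorm 0 ![false, false] ![true, true]
  simp only [sum_pi_fin_two, Fin.sum_univ_two, Fintype.sum_bool] at h4
  have h5 := hnorm 0 ![false, true] ![false, false]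
  simp only [sum_pi_fin_two, Fin.sum_univ_two, Fintype.sum_bool] at h5
  have h6 := hnorm 0 ![true, false] ![false, false]
  simp only [sum_pi_fin_two, Fin.sum_univ_two, Fintype.sum_bool] at h6
  have h7 := hnorm 0 ![true, false] ![false, true]
  simp only [sum_pi_fin_two, Fin.sum_univ_two, Fintype.sum_bool] at h7
  have h8 := hnorm 0 ![true, false] ![true, false]
  simp only [sum_pi_fin_two, Fin.sum_univ_two, Fintype.sum_bool] at h8
  have h9 := hnorm 0 ![true, true] ![false, false]
  simp only [sum_pi_fin_two, Fin.sum_univ_two, Fintype.sum_bool] at h9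
  have h10 := hnorm 0 ![true, true] ![false, true]
  simp only [sum_pi_fin_two, Fin.sum_univ_two, Fintype.sum_bool] at h10
  have h11 := hnorm 1 ![false, false] ![false, false]
  simp only [sum_pi_fin_two, Fin.sum_univ_two, Fintype.sum_bool] at h11
  have h12 := hnorm 1 ![false, false] ![false, true]
  simp only [sum_pi_fin_two, Fin.sum_univ_two, Fintype.sum_bool] at h12
  have h13 := hnorm 1 ![false, false] ![true, true]
  simp only [sum_pi_fin_two, Fin.sum_univ_two, Fintype.sum_bool] at h13
  have h14 := hnorm 1 ![false, true] ![false, false]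
  simp only [sum_pi_fin_two, Fin.sum_univ_two, Fintype.sum_bool] at h14
  have h15 := hnorm 1 ![true, false] ![false, false]
  simp only [sum_pi_fin_two, Fin.sum_univ_two, Fintype.sum_bool] at h15
  have h16 := hnorm 1 ![true, false] ![false, true]
  simp only [sum_pi_fin_two, Fin.sum_univ_two, Fintype.sum_bool] at h16
  have h17 := hnorm 1 ![true, false] ![true, true]
  simp only [sum_pi_fin_two, Fin.sum_univ_two, Fintype.sum_bool] at h17
  have h18 := hnorm 1 ![true, true] ![false, false]
  simp only [sum_pi_fin_two, Fin.sum_univ_two, Fintype.sum_bool] at h18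
  have h19 := hnorm 1 ![true, true] ![false, true]
  simp only [sum_pi_fin_two, Fin.sum_univ_two, Fintype.sum_bool] at h19
  have h20 := hC1 ![false, false] 0 ![false, false] ![false, true] ![false, false]
  simp only [Fin.sum_univ_two] at h20
  have h21 := hC1 ![false, false] 0 ![true, false] ![false, true] ![false, false]
  simp only [Fin.sum_univ_two] at h21
  have h22 := hC1 ![false, false] 0 ![true, false] ![true, false] ![false, false]
  simp only [Fin.sum_univ_two] at h22
  have h23 := hC1 ![false, false] 0 ![true, true] ![true, false] ![false, false]
  simp only [Fin.sum_univ_two] at h23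
  have h24 := hC1 ![false, false] 1 ![false, false] ![true, true] ![false, false]
  simp only [Fin.sum_univ_two] at h24
  have h25 := hC1 ![false, false] 1 ![false, true] ![false, true] ![false, false]
  simp only [Fin.sum_univ_two] at h25
  have h26 := hC1 ![false, false] 1 ![true, false] ![false, true] ![false, false]
  simp only [Fin.sum_univ_two] at h26
  have h27 := hC1 ![false, false] 1 ![true, false] ![true, true] ![false, false]
  simp only [Fin.sum_univ_two] at h27
  have h28 := hC1 ![false, false] 1 ![true, true] ![true, false] ![false, false]
  simp only [Fin.sum_univ_two] at h28
  have h29 := hC1 ![false, true] 0 ![false, false] ![false, true] ![false, false]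
  simp only [Fin.sum_univ_two] at h29
  have h30 := hC1 ![false, true] 0 ![false, true] ![false, true] ![false, false]
  simp only [Fin.sum_univ_two] at h30
  have h31 := hC1 ![false, true] 0 ![true, false] ![false, true] ![false, false]
  simp only [Fin.sum_univ_two] at h31
  have h32 := hC1 ![false, true] 0 ![true, false] ![true, true] ![false, false]
  simp only [Fin.sum_univ_two] at h32
  have h33 := hC1 ![false, true] 0 ![true, true] ![false, true] ![false, false]
  simp only [Fin.sum_univ_two] at h33
  have h34 := hC1 ![false, true] 0 ![true, true] ![true, false] ![false, false]
  simp only [Fin.sum_univ_two] at h34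
  have h35 := hC1 ![false, true] 1 ![false, false] ![false, true] ![false, false]
  simp only [Fin.sum_univ_two] at h35
  have h36 := hC1 ![false, true] 1 ![false, false] ![true, true] ![false, false]
  simp only [Fin.sum_univ_two] at h36
  have h37 := hC1 ![false, true] 1 ![false, true] ![false, true] ![false, false]
  simp only [Fin.sum_univ_two] at h37
  have h38 := hC1 ![false, true] 1 ![true, false] ![false, true] ![false, false]
  simp only [Fin.sum_univ_two] at h38
  have h39 := hC1 ![false, true] 1 ![true, false] ![true, true] ![false, false]
  simp only [Fin.sum_univ_two] at h39
  have h40 := hC1 ![false, true] 1 ![true, true] ![false, true] ![false, false]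
  simp only [Fin.sum_univ_two] at h40
  have h41 := hC1 ![false, true] 1 ![true, true] ![true, true] ![false, false]
  simp only [Fin.sum_univ_two] at h41
  have h42 := hC1 ![true, false] 0 ![false, false] ![true, false] ![false, false]
  simp only [Fin.sum_univ_two] at h42
  have h43 := hC1 ![true, false] 0 ![false, true] ![false, true] ![false, false]
  simp only [Fin.sum_univ_two] at h43
  have h44 := hC1 ![true, false] 0 ![false, true] ![true, false] ![false, false]
  simp only [Fin.sum_univ_two] at h44
  have h45 := hC1 ![true, false] 0 ![true, false] ![true, false] ![false, false]
  simp only [Fin.sum_univ_two] at h45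
  have h46 := hC1 ![true, false] 0 ![true, true] ![true, false] ![false, false]
  simp only [Fin.sum_univ_two] at h46
  have h47 := hC1 ![true, false] 1 ![false, false] ![false, true] ![false, false]
  simp only [Fin.sum_univ_two] at h47
  have h48 := hC1 ![true, false] 1 ![false, false] ![true, false] ![false, false]
  simp only [Fin.sum_univ_two] at h48
  have h49 := hC1 ![true, false] 1 ![false, true] ![true, false] ![false, false]
  simp only [Fin.sum_univ_two] at h49
  have h50 := hC1 ![true, false] 1 ![false, true] ![true, true] ![false, false]
  simp only [Fin.sum_univ_two] at h50
  have h51 := hC1 ![true, false] 1 ![true, false] ![true, false] ![false, false]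
  simp only [Fin.sum_univ_two] at h51
  have h52 := hC1 ![true, false] 1 ![true, true] ![true, false] ![false, false]
  simp only [Fin.sum_univ_two] at h52
  have h53 := hC1 ![true, false] 1 ![true, true] ![true, true] ![false, false]
  simp only [Fin.sum_univ_two] at h53
  have h54 := hC1 ![true, true] 0 ![false, false] ![true, false] ![false, false]
  simp only [Fin.sum_univ_two] at h54
  have h55 := hC1 ![true, true] 0 ![false, false] ![true, true] ![false, false]
  simp only [Fin.sum_univ_two] at h55
  have h56 := hC1 ![true, true] 0 ![false, true] ![false, true] ![false, false]
  simp only [Fin.sum_univ_two] at h56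
  have h57 := hC1 ![true, true] 0 ![false, true] ![true, true] ![false, false]
  simp only [Fin.sum_univ_two] at h57
  have h58 := hC1 ![true, true] 0 ![true, false] ![true, false] ![false, false]
  simp only [Fin.sum_univ_two] at h58
  have h59 := hC1 ![true, true] 0 ![true, false] ![true, true] ![false, false]
  simp only [Fin.sum_univ_two] at h59
  have h60 := hC1 ![true, true] 0 ![true, true] ![true, true] ![false, false]
  simp only [Fin.sum_univ_two] at h60
  have h61 := hC1 ![true, true] 1 ![false, false] ![false, true] ![false, false]
  simp only [Fin.sum_univ_two] at h61
  have h62 := hC1 ![true, true] 1 ![false, false] ![true, false] ![false, false]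
  simp only [Fin.sum_univ_two] at h62
  have h63 := hC1 ![true, true] 1 ![false, false] ![true, true] ![false, false]
  simp only [Fin.sum_univ_two] at h63
  have h64 := hC1 ![true, true] 1 ![false, true] ![true, true] ![false, false]
  simp only [Fin.sum_univ_two] at h64
  have h65 := hC1 ![true, true] 1 ![true, false] ![true, true] ![false, false]
  simp only [Fin.sum_univ_two] at h65
  have h66 := hC1 ![true, true] 1 ![true, true] ![true, true] ![false, false]
  simp only [Fin.sum_univ_two] at h66
  have h67 := hC2 0 0 0 ![false, true] ![false, false] ![false, false]
  simp only [sum_pi_fin_two, Fintype.sum_bool] at h67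
  have h68 := hC2 0 0 0 ![true, false] ![false, false] ![false, false]
  simp only [sum_pi_fin_two, Fintype.sum_bool] at h68
  have h69 := hC2 0 0 0 ![false, true] ![false, false] ![false, true]
  simp only [sum_pi_fin_two, Fintype.sum_bool] at h69
  have h70 := hC2 0 0 0 ![true, false] ![false, false] ![true, false]
  simp only [sum_pi_fin_two, Fintype.sum_bool] at h70
  have h71 := hC2 0 0 0 ![false, true] ![false, false] ![true, true]
  simp only [sum_pi_fin_two, Fintype.sum_bool] at h71
  have h72 := hC2 0 0 0 ![true, true] ![false, false] ![true, true]
  simp only [sum_pi_fin_two, Fintype.sum_bool] at h72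
  have h73 := hC2 1 1 0 ![false, false] ![false, false] ![false, false]
  simp only [sum_pi_fin_two, Fintype.sum_bool] at h73
  have h74 := hC2 1 1 0 ![false, true] ![false, false] ![false, false]
  simp only [sum_pi_fin_two, Fintype.sum_bool] at h74
  have h75 := hC2 1 1 0 ![true, false] ![false, false] ![false, false]
  simp only [sum_pi_fin_two, Fintype.sum_bool] at h75
  have h76 := hC2 1 1 0 ![false, false] ![false, false] ![false, true]
  simp only [sum_pi_fin_two, Fintype.sum_bool] at h76
  have h77 := hC2 1 1 0 ![false, true] ![false, false] ![false, true]
  simp only [sum_pi_fin_two, Fintype.sum_bool] at h77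
  have h78 := hC2 1 1 0 ![true, false] ![false, false] ![true, false]
  simp only [sum_pi_fin_two, Fintype.sum_bool] at h78
  have h79 := hC2 1 1 0 ![false, false] ![false, false] ![true, true]
  simp only [sum_pi_fin_two, Fintype.sum_bool] at h79
  have h80 := hC2 1 1 0 ![true, false] ![false, false] ![true, true]
  simp only [sum_pi_fin_two, Fintype.sum_bool] at h80
  have h81 := hC2 1 1 0 ![true, true] ![false, false] ![true, true]
  simp only [sum_pi_fin_two, Fintype.sum_bool] at h81
  have h82 := hC3 1 le_rfl one_lt_two ![false, false] 0 0 ![false, false] ![false, true] ![false, false] (by decide)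
  rw [Finset.filter_congr_decidable, Finset.filter_congr_decidable] at h82
  simp only [Finset.sum_filter, sum_pi_fin_two, Fintype.sum_bool] at h82
  norm_num [Fin.forall_fin_two] at h82
  have h83 := hC3 1 le_rfl one_lt_two ![true, false] 0 0 ![false, false] ![false, true] ![false, true] (by decide)
  rw [Finset.filter_congr_decidable, Finset.filter_congr_decidable] at h83
  simp only [Finset.sum_filter, sum_pi_fin_two, Fintype.sum_bool] at h83
  norm_num [Fin.forall_fin_two] at h83
  have h84 := hC3 1 le_rfl one_lt_two ![true, false] 0 0 ![true, false] ![true, true] ![false, true] (by decide)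
  rw [Finset.filter_congr_decidable, Finset.filter_congr_decidable] at h84
  simp only [Finset.sum_filter, sum_pi_fin_two, Fintype.sum_bool] at h84
  norm_num [Fin.forall_fin_two] at h84
  have h85 := hC3 1 le_rfl one_lt_two ![false, false] 0 0 ![false, false] ![false, true] ![true, true] (by decide)
  rw [Finset.filter_congr_decidable, Finset.filter_congr_decidable] at h85
  simp only [Finset.sum_filter, sum_pi_fin_two, Fintype.sum_bool] at h85
  norm_num [Fin.forall_fin_two] at h85
  have h86 := hC3 1 le_rfl one_lt_two ![false, false] 0 1 ![true, false] ![true, true] ![false, false] (by decide)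
  rw [Finset.filter_congr_decidable, Finset.filter_congr_decidable] at h86
  simp only [Finset.sum_filter, sum_pi_fin_two, Fintype.sum_bool] at h86
  norm_num [Fin.forall_fin_two] at h86
  have h87 := hC3 1 le_rfl one_lt_two ![false, false] 0 1 ![false, false] ![false, true] ![false, true] (by decide)
  rw [Finset.filter_congr_decidable, Finset.filter_congr_decidable] at h87
  simp only [Finset.sum_filter, sum_pi_fin_two, Fintype.sum_bool] at h87
  norm_num [Fin.forall_fin_two] at h87
  have h88 := hC3 1 le_rfl one_lt_two ![false, false] 0 1 ![true, false] ![true, true] ![false, true] (by decide)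
  rw [Finset.filter_congr_decidable, Finset.filter_congr_decidable] at h88
  simp only [Finset.sum_filter, sum_pi_fin_two, Fintype.sum_bool] at h88
  norm_num [Fin.forall_fin_two] at h88
  have h89 := hC3 1 le_rfl one_lt_two ![true, false] 0 1 ![true, false] ![true, true] ![false, true] (by decide)
  rw [Finset.filter_congr_decidable, Finset.filter_congr_decidable] at h89
  simp only [Finset.sum_filter, sum_pi_fin_two, Fintype.sum_bool] at h89
  norm_num [Fin.forall_fin_two] at h89
  have h90 := hC3 1 le_rfl one_lt_two ![true, false] 0 1 ![false, false] ![false, true] ![true, true] (by decide)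
  rw [Finset.filter_congr_decidable, Finset.filter_congr_decidable] at h90
  simp only [Finset.sum_filter, sum_pi_fin_two, Fintype.sum_bool] at h90
  norm_num [Fin.forall_fin_two] at h90
  have h91 := hC3 1 le_rfl one_lt_two ![true, false] 0 1 ![true, false] ![true, true] ![true, true] (by decide)
  rw [Finset.filter_congr_decidable, Finset.filter_congr_decidable] at h91
  simp only [Finset.sum_filter, sum_pi_fin_two, Fintype.sum_bool] at h91
  norm_num [Fin.forall_fin_two] at h91
  have h92 := hC3 1 le_rfl one_lt_two ![false, false] 1 0 ![true, false] ![true, true] ![false, true] (by decide)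
  rw [Finset.filter_congr_decidable, Finset.filter_congr_decidable] at h92
  simp only [Finset.sum_filter, sum_pi_fin_two, Fintype.sum_bool] at h92
  norm_num [Fin.forall_fin_two] at h92
  have h93 := hC3 1 le_rfl one_lt_two ![true, false] 1 0 ![false, false] ![false, true] ![false, true] (by decide)
  rw [Finset.filter_congr_decidable, Finset.filter_congr_decidable] at h93
  simp only [Finset.sum_filter, sum_pi_fin_two, Fintype.sum_bool] at h93
  norm_num [Fin.forall_fin_two] at h93
  have h94 := hC3 1 le_rfl one_lt_two ![true, false] 1 0 ![true, false] ![true, true] ![false, true] (by decide)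
  rw [Finset.filter_congr_decidable, Finset.filter_congr_decidable] at h94
  simp only [Finset.sum_filter, sum_pi_fin_two, Fintype.sum_bool] at h94
  norm_num [Fin.forall_fin_two] at h94
  have h95 := hC3 1 le_rfl one_lt_two ![false, false] 1 0 ![true, false] ![true, true] ![true, false] (by decide)
  rw [Finset.filter_congr_decidable, Finset.filter_congr_decidable] at h95
  simp only [Finset.sum_filter, sum_pi_fin_two, Fintype.sum_bool] at h95
  norm_num [Fin.forall_fin_two] at h95
  have h96 := hC3 1 le_rfl one_lt_two ![false, false] 1 1 ![true, false] ![true, true] ![false, false] (by decide)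
  rw [Finset.filter_congr_decidable, Finset.filter_congr_decidable] at h96
  simp only [Finset.sum_filter, sum_pi_fin_two, Fintype.sum_bool] at h96
  norm_num [Fin.forall_fin_two] at h96
  have h97 := hC3 1 le_rfl one_lt_two ![true, false] 1 1 ![true, false] ![true, true] ![false, true] (by decide)
  rw [Finset.filter_congr_decidable, Finset.filter_congr_decidable] at h97
  simp only [Finset.sum_filter, sum_pi_fin_two, Fintype.sum_bool] at h97
  norm_num [Fin.forall_fin_two] at h97
  have key : ((1/8 : ℝ) * Z ![false, false] 0 0 ![false, false] ![false, false] +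
      (1/16 : ℝ) * Z ![false, false] 0 0 ![false, true] ![false, false] +
      (1/16 : ℝ) * Z ![false, false] 0 0 ![false, true] ![false, true] +
      (1/16 : ℝ) * Z ![false, false] 0 0 ![true, false] ![false, false] +
      (1/16 : ℝ) * Z ![false, false] 0 0 ![true, false] ![true, false] +
      (1/32 : ℝ) * Z ![false, false] 0 0 ![true, true] ![false, false] +
      (1/32 : ℝ) * Z ![false, false] 0 0 ![true, true] ![false, true] +
      (1/32 : ℝ) * Z ![false, false] 0 0 ![true, true] ![true, false] +
      (1/32 : ℝ) * Z ![false, false] 0 0 ![true, true] ![true, true] +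
      (1/8 : ℝ) * Z ![false, false] 1 1 ![false, false] ![false, false] +
      (1/16 : ℝ) * Z ![false, false] 1 1 ![false, true] ![false, false] +
      (1/16 : ℝ) * Z ![false, false] 1 1 ![false, true] ![false, true] +
      (1/16 : ℝ) * Z ![false, false] 1 1 ![true, false] ![false, false] +
      (1/16 : ℝ) * Z ![false, false] 1 1 ![true, false] ![true, false] +
      (1/32 : ℝ) * Z ![false, false] 1 1 ![true, true] ![false, false] +
      (1/32 : ℝ) * Z ![false, false] 1 1 ![true, true] ![false, true] +
      (1/32 : ℝ) * Z ![false, false] 1 1 ![true, true] ![true, false] +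
      (1/32 : ℝ) * Z ![false, false] 1 1 ![true, true] ![true, true] +
      (1/16 : ℝ) * Z ![false, true] 0 0 ![false, false] ![false, false] +
      (1/16 : ℝ) * Z ![false, true] 0 0 ![false, false] ![false, true] +
      (1/8 : ℝ) * Z ![false, true] 0 0 ![false, true] ![false, true] +
      (1/32 : ℝ) * Z ![false, true] 0 0 ![true, false] ![false, false] +
      (1/32 : ℝ) * Z ![false, true] 0 0 ![true, false] ![false, true] +
      (1/32 : ℝ) * Z ![false, true] 0 0 ![true, false] ![true, false] +
      (1/32 : ℝ) * Z ![false, true] 0 0 ![true, false] ![true, true] +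
      (1/16 : ℝ) * Z ![false, true] 0 0 ![true, true] ![false, true] +
      (1/16 : ℝ) * Z ![false, true] 0 0 ![true, true] ![true, true] +
      (1/16 : ℝ) * Z ![false, true] 1 1 ![false, false] ![false, false] +
      (1/16 : ℝ) * Z ![false, true] 1 1 ![false, false] ![false, true] +
      (1/8 : ℝ) * Z ![false, true] 1 1 ![false, true] ![false, true] +
      (1/32 : ℝ) * Z ![false, true] 1 1 ![true, false] ![false, false] +
      (1/32 : ℝ) * Z ![false, true] 1 1 ![true, false] ![false, true] +
      (1/32 : ℝ) * Z ![false, true] 1 1 ![true, false] ![true, false] +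
      (1/32 : ℝ) * Z ![false, true] 1 1 ![true, false] ![true, true] +
      (1/16 : ℝ) * Z ![false, true] 1 1 ![true, true] ![false, true] +
      (1/16 : ℝ) * Z ![false, true] 1 1 ![true, true] ![true, true] +
      (1/16 : ℝ) * Z ![true, false] 0 0 ![false, false] ![false, false] +
      (1/16 : ℝ) * Z ![true, false] 0 0 ![false, false] ![true, false] +
      (1/32 : ℝ) * Z ![true, false] 0 0 ![false, true] ![false, false] +
      (1/32 : ℝ) * Z ![true, false] 0 0 ![false, true] ![false, true] +
      (1/32 : ℝ) * Z ![true, false] 0 0 ![false, true] ![true, false] +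
      (1/32 : ℝ) * Z ![true, false] 0 0 ![false, true] ![true, true] +
      (1/8 : ℝ) * Z ![true, false] 0 0 ![true, false] ![true, false] +
      (1/16 : ℝ) * Z ![true, false] 0 0 ![true, true] ![true, false] +
      (1/16 : ℝ) * Z ![true, false] 0 0 ![true, true] ![true, true] +
      (1/16 : ℝ) * Z ![true, false] 1 1 ![false, false] ![false, false] +
      (1/16 : ℝ) * Z ![true, false] 1 1 ![false, false] ![true, false] +
      (1/32 : ℝ) * Z ![true, false] 1 1 ![false, true] ![false, false] +
      (1/32 : ℝ) * Z ![true, false] 1 1 ![false, true] ![false, true] +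
      (1/32 : ℝ) * Z ![true, false] 1 1 ![false, true] ![true, false] +
      (1/32 : ℝ) * Z ![true, false] 1 1 ![false, true] ![true, true] +
      (1/8 : ℝ) * Z ![true, false] 1 1 ![true, false] ![true, false] +
      (1/16 : ℝ) * Z ![true, false] 1 1 ![true, true] ![true, false] +
      (1/16 : ℝ) * Z ![true, false] 1 1 ![true, true] ![true, true] +
      (1/32 : ℝ) * Z ![true, true] 0 0 ![false, false] ![false, false] +
      (1/32 : ℝ) * Z ![true, true] 0 0 ![false, false] ![false, true] +
      (1/32 : ℝ) * Z ![true, true] 0 0 ![false, false] ![true, false] +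
      (1/32 : ℝ) * Z ![true, true] 0 0 ![false, false] ![true, true] +
      (1/16 : ℝ) * Z ![true, true] 0 0 ![false, true] ![false, true] +
      (1/16 : ℝ) * Z ![true, true] 0 0 ![false, true] ![true, true] +
      (1/16 : ℝ) * Z ![true, true] 0 0 ![true, false] ![true, false] +
      (1/16 : ℝ) * Z ![true, true] 0 0 ![true, false] ![true, true] +
      (1/8 : ℝ) * Z ![true, true] 0 0 ![true, true] ![true, true] +
      (1/32 : ℝ) * Z ![true, true] 1 1 ![false, false] ![false, false] +
      (1/32 : ℝ) * Z ![true, true] 1 1 ![false, false] ![false, true] +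
      (1/32 : ℝ) * Z ![true, true] 1 1 ![false, false] ![true, false] +
      (1/32 : ℝ) * Z ![true, true] 1 1 ![false, false] ![true, true] +
      (1/16 : ℝ) * Z ![true, true] 1 1 ![false, true] ![false, true] +
      (1/16 : ℝ) * Z ![true, true] 1 1 ![false, true] ![true, true] +
      (1/16 : ℝ) * Z ![true, true] 1 1 ![true, false] ![true, false] +
      (1/16 : ℝ) * Z ![true, true] 1 1 ![true, false] ![true, true] +
      (1/8 : ℝ) * Z ![true, true] 1 1 ![true, true] ![true, true]) +
      ((1/32 : ℝ) * Z ![false, false] 0 0 ![false, false] ![false, true] +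
      (1/32 : ℝ) * Z ![false, false] 0 0 ![false, false] ![true, true] +
      (1/32 : ℝ) * Z ![false, false] 0 0 ![true, true] ![true, true] +
      (1/16 : ℝ) * Z ![false, false] 0 1 ![false, false] ![false, false] +
      (1/32 : ℝ) * Z ![false, false] 0 1 ![false, true] ![false, false] +
      (1/32 : ℝ) * Z ![false, false] 0 1 ![true, false] ![false, false] +
      (1/32 : ℝ) * Z ![false, false] 0 1 ![true, false] ![false, true] +
      (1/32 : ℝ) * Z ![false, false] 0 1 ![true, true] ![false, false] +
      (1/32 : ℝ) * Z ![false, false] 0 1 ![true, true] ![true, false] +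
      (1/32 : ℝ) * Z ![false, false] 1 0 ![false, false] ![false, false] +
      (1/16 : ℝ) * Z ![false, false] 1 0 ![false, true] ![false, false] +
      (1/32 : ℝ) * Z ![false, false] 1 0 ![true, false] ![false, false] +
      (1/32 : ℝ) * Z ![false, false] 1 0 ![true, false] ![false, true] +
      (1/32 : ℝ) * Z ![false, false] 1 0 ![true, false] ![true, false] +
      (1/32 : ℝ) * Z ![false, false] 1 0 ![true, true] ![false, false] +
      (1/32 : ℝ) * Z ![false, false] 1 1 ![false, false] ![true, true] +
      (1/32 : ℝ) * Z ![false, false] 1 1 ![false, true] ![false, true] +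
      (1/32 : ℝ) * Z ![false, false] 1 1 ![true, false] ![true, true] +
      (1/32 : ℝ) * Z ![false, true] 0 0 ![false, false] ![false, false] +
      (1/32 : ℝ) * Z ![false, true] 0 0 ![false, false] ![true, true] +
      (1/32 : ℝ) * Z ![false, true] 0 0 ![true, true] ![true, false] +
      (1/16 : ℝ) * Z ![false, true] 0 1 ![false, false] ![false, true] +
      (1/32 : ℝ) * Z ![false, true] 0 1 ![false, true] ![false, true] +
      (1/16 : ℝ) * Z ![false, true] 0 1 ![true, false] ![false, true] +
      (1/32 : ℝ) * Z ![false, true] 0 1 ![true, true] ![false, true] +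
      (1/32 : ℝ) * Z ![false, true] 0 1 ![true, true] ![true, true] +
      (1/32 : ℝ) * Z ![false, true] 1 0 ![false, false] ![false, true] +
      (1/16 : ℝ) * Z ![false, true] 1 0 ![false, true] ![false, true] +
      (1/16 : ℝ) * Z ![false, true] 1 0 ![true, false] ![false, true] +
      (1/32 : ℝ) * Z ![false, true] 1 0 ![true, false] ![true, true] +
      (1/32 : ℝ) * Z ![false, true] 1 0 ![true, true] ![false, true] +
      (1/32 : ℝ) * Z ![false, true] 1 1 ![false, false] ![true, true] +
      (1/32 : ℝ) * Z ![false, true] 1 1 ![false, true] ![false, false] +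
      (1/32 : ℝ) * Z ![false, true] 1 1 ![true, false] ![true, false] +
      (1/32 : ℝ) * Z ![true, false] 0 0 ![false, false] ![false, true] +
      (1/32 : ℝ) * Z ![true, false] 0 0 ![false, true] ![false, true] +
      (1/32 : ℝ) * Z ![true, false] 0 0 ![true, false] ![false, false] +
      (1/16 : ℝ) * Z ![true, false] 0 1 ![false, false] ![true, false] +
      (1/32 : ℝ) * Z ![true, false] 0 1 ![false, true] ![true, false] +
      (1/16 : ℝ) * Z ![true, false] 0 1 ![true, false] ![true, false] +
      (1/16 : ℝ) * Z ![true, false] 0 1 ![true, true] ![true, false] +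
      (1/16 : ℝ) * Z ![true, false] 1 0 ![false, false] ![true, false] +
      (1/32 : ℝ) * Z ![true, false] 1 0 ![false, true] ![true, false] +
      (1/16 : ℝ) * Z ![true, false] 1 0 ![true, false] ![true, false] +
      (1/16 : ℝ) * Z ![true, false] 1 0 ![true, true] ![true, false] +
      (1/32 : ℝ) * Z ![true, false] 1 1 ![false, false] ![false, true] +
      (1/32 : ℝ) * Z ![true, false] 1 1 ![false, true] ![false, true] +
      (1/32 : ℝ) * Z ![true, false] 1 1 ![true, false] ![false, false] +
      (1/32 : ℝ) * Z ![true, true] 0 0 ![false, false] ![false, false] +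
      (1/32 : ℝ) * Z ![true, true] 0 0 ![false, true] ![false, false] +
      (1/32 : ℝ) * Z ![true, true] 0 0 ![true, false] ![false, false] +
      (1/32 : ℝ) * Z ![true, true] 0 1 ![false, false] ![true, false] +
      (1/32 : ℝ) * Z ![true, true] 0 1 ![false, false] ![true, true] +
      (1/32 : ℝ) * Z ![true, true] 0 1 ![false, true] ![true, true] +
      (1/16 : ℝ) * Z ![true, true] 0 1 ![true, false] ![true, true] +
      (1/16 : ℝ) * Z ![true, true] 0 1 ![true, true] ![true, true] +
      (1/32 : ℝ) * Z ![true, true] 1 0 ![false, false] ![true, false] +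
      (1/32 : ℝ) * Z ![true, true] 1 0 ![false, false] ![true, true] +
      (1/32 : ℝ) * Z ![true, true] 1 0 ![false, true] ![true, true] +
      (1/16 : ℝ) * Z ![true, true] 1 0 ![true, false] ![true, true] +
      (1/16 : ℝ) * Z ![true, true] 1 0 ![true, true] ![true, true] +
      (1/32 : ℝ) * Z ![true, true] 1 1 ![false, false] ![false, false] +
      (1/32 : ℝ) * Z ![true, true] 1 1 ![false, true] ![false, false] +
      (1/32 : ℝ) * Z ![true, true] 1 1 ![true, false] ![false, false]) = 13/16 := by
    linear_combination (3/16 : ℝ) * h1 +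
        (1/16 : ℝ) * h2 +
        (1/16 : ℝ) * h3 +
        (3/32 : ℝ) * h4 +
        (1/16 : ℝ) * h5 +
        (3/32 : ℝ) * h6 +
        (-1/32 : ℝ) * h7 +
        (-1/32 : ℝ) * h8 +
        (1/16 : ℝ) * h9 +
        (1/32 : ℝ) * h10 +
        (3/32 : ℝ) * h11 +
        (-1/32 : ℝ) * h12 +
        (-1/32 : ℝ) * h13 +
        (1/16 : ℝ) * h14 +
        (1/16 : ℝ) * h15 +
        (-1/32 : ℝ) * h16 +
        (-1/32 : ℝ) * h17 +
        (3/32 : ℝ) * h18 +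
        (1/32 : ℝ) * h19 +
        (1/32 : ℝ) * h20 +
        (1/32 : ℝ) * h21 +
        (1/32 : ℝ) * h22 +
        (1/32 : ℝ) * h23 +
        (1/32 : ℝ) * h24 +
        (1/32 : ℝ) * h25 +
        (1/32 : ℝ) * h26 +
        (1/32 : ℝ) * h27 +
        (1/32 : ℝ) * h28 +
        (1/16 : ℝ) * h29 +
        (1/16 : ℝ) * h30 +
        (1/16 : ℝ) * h31 +
        (1/32 : ℝ) * h32 +
        (1/32 : ℝ) * h33 +
        (1/32 : ℝ) * h34 +
        (1/16 : ℝ) * h35 +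
        (1/32 : ℝ) * h36 +
        (1/16 : ℝ) * h37 +
        (1/16 : ℝ) * h38 +
        (1/32 : ℝ) * h39 +
        (1/32 : ℝ) * h40 +
        (1/32 : ℝ) * h41 +
        (1/16 : ℝ) * h42 +
        (1/32 : ℝ) * h43 +
        (1/32 : ℝ) * h44 +
        (3/32 : ℝ) * h45 +
        (1/16 : ℝ) * h46 +
        (1/32 : ℝ) * h47 +
        (1/16 : ℝ) * h48 +
        (1/32 : ℝ) * h49 +
        (1/32 : ℝ) * h50 +
        (1/16 : ℝ) * h51 +
        (1/16 : ℝ) * h52 +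
        (1/32 : ℝ) * h53 +
        (1/32 : ℝ) * h54 +
        (1/32 : ℝ) * h55 +
        (1/32 : ℝ) * h56 +
        (1/32 : ℝ) * h57 +
        (1/32 : ℝ) * h58 +
        (1/16 : ℝ) * h59 +
        (1/16 : ℝ) * h60 +
        (1/32 : ℝ) * h61 +
        (1/32 : ℝ) * h62 +
        (1/32 : ℝ) * h63 +
        (1/16 : ℝ) * h64 +
        (1/16 : ℝ) * h65 +
        (3/32 : ℝ) * h66 +
        (1/32 : ℝ) * h67 +
        (1/32 : ℝ) * h68 +
        (1/16 : ℝ) * h69 +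
        (1/16 : ℝ) * h70 +
        (1/32 : ℝ) * h71 +
        (1/16 : ℝ) * h72 +
        (1/16 : ℝ) * h73 +
        (1/32 : ℝ) * h74 +
        (1/32 : ℝ) * h75 +
        (1/32 : ℝ) * h76 +
        (1/16 : ℝ) * h77 +
        (1/16 : ℝ) * h78 +
        (1/32 : ℝ) * h79 +
        (1/32 : ℝ) * h80 +
        (1/32 : ℝ) * h81 +
        (1/32 : ℝ) * h82 +
        (1/32 : ℝ) * h83 +
        (1/32 : ℝ) * h84 +
        (1/32 : ℝ) * h85 +
        (1/32 : ℝ) * h86 +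
        (1/32 : ℝ) * h87 +
        (1/32 : ℝ) * h88 +
        (1/32 : ℝ) * h89 +
        (1/32 : ℝ) * h90 +
        (1/32 : ℝ) * h91 +
        (1/32 : ℝ) * h92 +
        (1/32 : ℝ) * h93 +
        (1/32 : ℝ) * h94 +
        (1/32 : ℝ) * h95 +
        (1/32 : ℝ) * h96 +
        (1/32 : ℝ) * h97
  have hS : (0:ℝ) ≤
      (1/32 : ℝ) * Z ![false, false] 0 0 ![false, false] ![false, true] +
      (1/32 : ℝ) * Z ![false, false] 0 0 ![false, false] ![true, true] +
      (1/32 : ℝ) * Z ![false, false] 0 0 ![true, true] ![true, true] +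
      (1/16 : ℝ) * Z ![false, false] 0 1 ![false, false] ![false, false] +
      (1/32 : ℝ) * Z ![false, false] 0 1 ![false, true] ![false, false] +
      (1/32 : ℝ) * Z ![false, false] 0 1 ![true, false] ![false, false] +
      (1/32 : ℝ) * Z ![false, false] 0 1 ![true, false] ![false, true] +
      (1/32 : ℝ) * Z ![false, false] 0 1 ![true, true] ![false, false] +
      (1/32 : ℝ) * Z ![false, false] 0 1 ![true, true] ![true, false] +
      (1/32 : ℝ) * Z ![false, false] 1 0 ![false, false] ![false, false] +
      (1/16 : ℝ) * Z ![false, false] 1 0 ![false, true] ![false, false] +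
      (1/32 : ℝ) * Z ![false, false] 1 0 ![true, false] ![false, false] +
      (1/32 : ℝ) * Z ![false, false] 1 0 ![true, false] ![false, true] +
      (1/32 : ℝ) * Z ![false, false] 1 0 ![true, false] ![true, false] +
      (1/32 : ℝ) * Z ![false, false] 1 0 ![true, true] ![false, false] +
      (1/32 : ℝ) * Z ![false, false] 1 1 ![false, false] ![true, true] +
      (1/32 : ℝ) * Z ![false, false] 1 1 ![false, true] ![false, true] +
      (1/32 : ℝ) * Z ![false, false] 1 1 ![true, false] ![true, true] +
      (1/32 : ℝ) * Z ![false, true] 0 0 ![false, false] ![false, false] +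
      (1/32 : ℝ) * Z ![false, true] 0 0 ![false, false] ![true, true] +
      (1/32 : ℝ) * Z ![false, true] 0 0 ![true, true] ![true, false] +
      (1/16 : ℝ) * Z ![false, true] 0 1 ![false, false] ![false, true] +
      (1/32 : ℝ) * Z ![false, true] 0 1 ![false, true] ![false, true] +
      (1/16 : ℝ) * Z ![false, true] 0 1 ![true, false] ![false, true] +
      (1/32 : ℝ) * Z ![false, true] 0 1 ![true, true] ![false, true] +
      (1/32 : ℝ) * Z ![false, true] 0 1 ![true, true] ![true, true] +
      (1/32 : ℝ) * Z ![false, true] 1 0 ![false, false] ![false, true] +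
      (1/16 : ℝ) * Z ![false, true] 1 0 ![false, true] ![false, true] +
      (1/16 : ℝ) * Z ![false, true] 1 0 ![true, false] ![false, true] +
      (1/32 : ℝ) * Z ![false, true] 1 0 ![true, false] ![true, true] +
      (1/32 : ℝ) * Z ![false, true] 1 0 ![true, true] ![false, true] +
      (1/32 : ℝ) * Z ![false, true] 1 1 ![false, false] ![true, true] +
      (1/32 : ℝ) * Z ![false, true] 1 1 ![false, true] ![false, false] +
      (1/32 : ℝ) * Z ![false, true] 1 1 ![true, false] ![true, false] +
      (1/32 : ℝ) * Z ![true, false] 0 0 ![false, false] ![false, true] +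
      (1/32 : ℝ) * Z ![true, false] 0 0 ![false, true] ![false, true] +
      (1/32 : ℝ) * Z ![true, false] 0 0 ![true, false] ![false, false] +
      (1/16 : ℝ) * Z ![true, false] 0 1 ![false, false] ![true, false] +
      (1/32 : ℝ) * Z ![true, false] 0 1 ![false, true] ![true, false] +
      (1/16 : ℝ) * Z ![true, false] 0 1 ![true, false] ![true, false] +
      (1/16 : ℝ) * Z ![true, false] 0 1 ![true, true] ![true, false] +
      (1/16 : ℝ) * Z ![true, false] 1 0 ![false, false] ![true, false] +
      (1/32 : ℝ) * Z ![true, false] 1 0 ![false, true] ![true, false] +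
      (1/16 : ℝ) * Z ![true, false] 1 0 ![true, false] ![true, false] +
      (1/16 : ℝ) * Z ![true, false] 1 0 ![true, true] ![true, false] +
      (1/32 : ℝ) * Z ![true, false] 1 1 ![false, false] ![false, true] +
      (1/32 : ℝ) * Z ![true, false] 1 1 ![false, true] ![false, true] +
      (1/32 : ℝ) * Z ![true, false] 1 1 ![true, false] ![false, false] +
      (1/32 : ℝ) * Z ![true, true] 0 0 ![false, false] ![false, false] +
      (1/32 : ℝ) * Z ![true, true] 0 0 ![false, true] ![false, false] +
      (1/32 : ℝ) * Z ![true, true] 0 0 ![true, false] ![false, false] +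
      (1/32 : ℝ) * Z ![true, true] 0 1 ![false, false] ![true, false] +
      (1/32 : ℝ) * Z ![true, true] 0 1 ![false, false] ![true, true] +
      (1/32 : ℝ) * Z ![true, true] 0 1 ![false, true] ![true, true] +
      (1/16 : ℝ) * Z ![true, true] 0 1 ![true, false] ![true, true] +
      (1/16 : ℝ) * Z ![true, true] 0 1 ![true, true] ![true, true] +
      (1/32 : ℝ) * Z ![true, true] 1 0 ![false, false] ![true, false] +
      (1/32 : ℝ) * Z ![true, true] 1 0 ![false, false] ![true, true] +
      (1/32 : ℝ) * Z ![true, true] 1 0 ![false, true] ![true, true] +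
      (1/16 : ℝ) * Z ![true, true] 1 0 ![true, false] ![true, true] +
      (1/16 : ℝ) * Z ![true, true] 1 0 ![true, true] ![true, true] +
      (1/32 : ℝ) * Z ![true, true] 1 1 ![false, false] ![false, false] +
      (1/32 : ℝ) * Z ![true, true] 1 1 ![false, true] ![false, false] +
      (1/32 : ℝ) * Z ![true, true] 1 1 ![true, false] ![false, false] := by
    repeat' apply add_nonneg
    all_goals exact mul_nonneg (by norm_num) (hpos _ _ _ _ _)
  linarith [hobj, key, hS]

/-- Strict separation for the Z0/Z1 channel: providing CSIR strictly
increases the optimal NS-assisted success probability with causal CSIT at `M = 2`, `n = 2`. -/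
theorem z0z1_csir_strict_separation :
    etaNSOpt (NCSIR NZ) PZ 2 2 > etaNSOpt NZ PZ 2 2 := by
  have hP : IsPMF PZ := ⟨fun s => by norm_num [PZ], by rw [Fintype.sum_bool]; norm_num [PZ]⟩
  have hN : IsChannel (NCSIR NZ) := by
    constructor
    · intro y x s
      rcases y with ⟨y, s'⟩
      cases x <;> cases s <;> cases y <;> cases s' <;> norm_num [NCSIR, NZ]
    · intro x s
      cases x <;> cases s <;>
        simp [NCSIR, NZ, Fintype.sum_prod_type, Fintype.sum_bool] <;> norm_num
  have h1 : etaNSOpt NZ PZ 2 2 ≤ 13/16 := by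
    rw [etaNSOpt]
    apply Real.sSup_le
    · rintro e ⟨Z, hZ, rfl⟩
      exact etaNS_ub Z hZ
    · norm_num
  have h2 : (7/8 : ℝ) ≤ etaNSOpt (NCSIR NZ) PZ 2 2 := by
    rw [etaNSOpt]
    apply le_csSup
    · exact ⟨1, by rintro e ⟨Z, hZ, rfl⟩; exact etaNS_le_one hN hP Z hZ⟩
    · exact ⟨Zw, Zw_isNSCa, etaZw⟩
  linarith

end
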